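/- Herglotz variational principle for fields, vakonomic version via Lagrange multipliers: Let U ⊆ ℝᵐ be open and convex, let L be a first-order field Lagrangian, and let u : ℝᵐ → ℝⁿ and z : ℝᵐ → ℝᵐ be smooth maps satisfying the constraint Σ_μ ∂z^μ/∂x^μ(x) = L(j(x)) on U. Then the following are equivalent: (1) there exists a smooth function λ : U → ℝ with λ(x) ≠ 1 for all x ∈ U such that on U, for every ν, ∂λ/∂x^ν = (1 − λ)·∂L/∂z^ν(j(·)), and, for every a, Σ_μ ∂/∂x^μ[ (1 − λ)·∂L/∂w^a_μ(j(·)) ] = (1 − λ)·∂L/∂u^a(j(·)); (2) the Herglotz field equations hold at every point of U and the closed action dependence condition holds along (u, z) at every point of U. -/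

import Mathlib

open Set

/-- Partial derivative of `F : ℝᵐ → ℝ` in the `μ`-th coordinate direction. -/
noncomputable def pd {m : ℕ} (μ : Fin m) (F : (Fin m → ℝ) → ℝ) (x : Fin m → ℝ) : ℝ :=
  fderiv ℝ F x (Pi.single μ (1 : ℝ))

/-- The space of first-jet variables `(x, u, w, z)` of a first-order field theory. -/
abbrev Jet1 (m n : ℕ) :=
  (Fin m → ℝ) × (Fin n → ℝ) × (Fin n → Fin m → ℝ) × (Fin m → ℝ)

/-- First-jet prolongation `j(x) = (x, u(x), Du(x), z(x))` of a section `(u, z)`. -/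
noncomputable def jet {m n : ℕ} (u : (Fin m → ℝ) → Fin n → ℝ)
    (z : (Fin m → ℝ) → Fin m → ℝ) (x : Fin m → ℝ) : Jet1 m n :=
  (x, u x, fun a μ => pd μ (fun y => u y a) x, z x)

/-- Partial derivative `∂L/∂u^a` of a first-order field Lagrangian. -/
noncomputable def Lu {m n : ℕ} (L : Jet1 m n → ℝ) (a : Fin n) (p : Jet1 m n) : ℝ :=
  fderiv ℝ L p (0, Pi.single a (1 : ℝ), 0, 0)

/-- Partial derivative `∂L/∂w^a_μ` of a first-order field Lagrangian. -/
noncomputable def Lw {m n : ℕ} (L : Jet1 m n → ℝ) (a : Fin n) (μ : Fin m)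
    (p : Jet1 m n) : ℝ :=
  fderiv ℝ L p (0, 0, Pi.single a (Pi.single μ (1 : ℝ)), 0)

/-- Partial derivative `∂L/∂z^μ` of a first-order field Lagrangian. -/
noncomputable def Lz {m n : ℕ} (L : Jet1 m n → ℝ) (μ : Fin m) (p : Jet1 m n) : ℝ :=
  fderiv ℝ L p (0, 0, 0, Pi.single μ (1 : ℝ))

/-! ### Auxiliary material -/

namespace HerglotzAux

open MeasureTheory Metric

lemma top_add_one_le : ((⊤:ℕ∞) : WithTop ℕ∞) + 1 ≤ ((⊤:ℕ∞) : WithTop ℕ∞) := by norm_num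

lemma one_le_top : (1 : WithTop ℕ∞) ≤ ((⊤:ℕ∞) : WithTop ℕ∞) := by norm_num

lemma two_le_top : (2 : WithTop ℕ∞) ≤ ((⊤:ℕ∞) : WithTop ℕ∞) :=
  le_trans (le_of_eq rfl) (WithTop.coe_le_coe.mpr (le_top : (2:ℕ∞) ≤ ⊤))

lemma hasFDerivAt_pd {m : ℕ} {F : (Fin m → ℝ) → ℝ} {D : (Fin m → ℝ) →L[ℝ] ℝ}
    {x : Fin m → ℝ} (h : HasFDerivAt F D x) (μ : Fin m) :
    pd μ F x = D (Pi.single μ 1) := by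
  unfold pd; rw [h.fderiv]

lemma pd_mul {m : ℕ} {μ : Fin m} {f g : (Fin m → ℝ) → ℝ} {x : Fin m → ℝ}
    (hf : DifferentiableAt ℝ f x) (hg : DifferentiableAt ℝ g x) :
    pd μ (fun y => f y * g y) x = pd μ f x * g x + f x * pd μ g x := by
  unfold pd
  rw [fderiv_fun_mul hf hg]
  simp only [ContinuousLinearMap.add_apply, ContinuousLinearMap.smul_apply, smul_eq_mul]
  ring

lemma pd_const_sub {m : ℕ} {μ : Fin m} {f : (Fin m → ℝ) → ℝ} {x : Fin m → ℝ} (c : ℝ) :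
    pd μ (fun y => c - f y) x = -pd μ f x := by
  unfold pd
  rw [fderiv_const_sub]
  simp

lemma pd_congr_nhds {m : ℕ} {μ : Fin m} {f g : (Fin m → ℝ) → ℝ} {x : Fin m → ℝ}
    (h : f =ᶠ[nhds x] g) : pd μ f x = pd μ g x := by
  unfold pd
  rw [h.fderiv_eq]

/-- Schwarz symmetry of second partial derivatives. -/
lemma pd_pd_symm {m : ℕ} {f : (Fin m → ℝ) → ℝ} {x : Fin m → ℝ}
    (hf : ContDiffAt ℝ (⊤:ℕ∞) f x) (μ ν : Fin m) :
    pd μ (fun y => pd ν f y) x = pd ν (fun y => pd μ f y) x := by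
  have hsymm : IsSymmSndFDerivAt ℝ f x := hf.isSymmSndFDerivAt (by rw [minSmoothness_of_isRCLikeNormedField]; exact two_le_top)
  have hdf : DifferentiableAt ℝ (fderiv ℝ f) x :=
    (hf.fderiv_right top_add_one_le).differentiableAt (by simp)
  have key : ∀ ρ σ : Fin m, pd ρ (fun y => pd σ f y) x
      = fderiv ℝ (fderiv ℝ f) x (Pi.single ρ 1) (Pi.single σ 1) := by
    intro ρ σ
    show fderiv ℝ (fun y => (fderiv ℝ f y) (Pi.single σ 1)) x (Pi.single ρ 1) = _
    rw [fderiv_clm_apply hdf (differentiableAt_const _)]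
    simp
  rw [key, key, hsymm]

/-- `T v = ∑ ν, v ν * T (e ν)` for a continuous linear functional on `ℝᵐ`. -/
lemma clm_apply_eq_sum {m : ℕ} (T : (Fin m → ℝ) →L[ℝ] ℝ) (v : Fin m → ℝ) :
    T v = ∑ ν, v ν * T (Pi.single ν 1) := by
  conv_lhs => rw [← Finset.univ_sum_single v]
  rw [map_sum]
  refine Finset.sum_congr rfl fun ν _ => ?_
  have hsingle : Pi.single ν (v ν) = v ν • (Pi.single ν (1:ℝ) : Fin m → ℝ) := by
    funext j
    by_cases h : ν = j <;> simp [Pi.single_apply, h]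
  rw [hsingle, T.map_smul, smul_eq_mul]

lemma sum_proj_apply_single {m : ℕ} (c : Fin m → ℝ) (ν : Fin m) :
    (∑ μ, c μ • (ContinuousLinearMap.proj (R := ℝ) (φ := fun _ : Fin m => ℝ) μ))
      (Pi.single ν (1:ℝ)) = c ν := by
  classical
  simp [ContinuousLinearMap.sum_apply, ContinuousLinearMap.smul_apply,
    ContinuousLinearMap.proj_apply, Pi.single_apply, Finset.sum_ite_eq', mul_ite]

/-- Smoothness of the jet prolongation. -/
lemma contDiff_jet {m n : ℕ} {u : (Fin m → ℝ) → Fin n → ℝ} (hu : ContDiff ℝ (⊤:ℕ∞) u)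
    {z : (Fin m → ℝ) → Fin m → ℝ} (hz : ContDiff ℝ (⊤:ℕ∞) z) :
    ContDiff ℝ (⊤:ℕ∞) (jet u z) := by
  refine contDiff_id.prodMk (hu.prodMk (ContDiff.prodMk ?_ hz))
  refine contDiff_pi.2 fun a => contDiff_pi.2 fun μ => ?_
  exact ((contDiff_pi.1 hu a).fderiv_right top_add_one_le).clm_apply contDiff_const

/-- Smoothness of a fixed-direction derivative of `L` along the jet. -/
lemma contDiff_dLjet {m n : ℕ} {L : Jet1 m n → ℝ} (hL : ContDiff ℝ (⊤:ℕ∞) L)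
    {u : (Fin m → ℝ) → Fin n → ℝ} (hu : ContDiff ℝ (⊤:ℕ∞) u)
    {z : (Fin m → ℝ) → Fin m → ℝ} (hz : ContDiff ℝ (⊤:ℕ∞) z) (v : Jet1 m n) :
    ContDiff ℝ (⊤:ℕ∞) (fun y => fderiv ℝ L (jet u z y) v) :=
  ((hL.fderiv_right top_add_one_le).comp (contDiff_jet hu hz)).clm_apply contDiff_const

/-! ### A Poincaré lemma on a convex open set -/

/-- straight path from `x₀` to `x`. -/
noncomputable def lseg {m : ℕ} (x₀ x : Fin m → ℝ) (t : ℝ) : Fin m → ℝ := x₀ + t • (x - x₀)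

/-- integrand for the potential. -/
noncomputable def Pfun {m : ℕ} (g : Fin m → (Fin m → ℝ) → ℝ) (x₀ x : Fin m → ℝ) (t : ℝ) : ℝ :=
  ∑ μ, g μ (lseg x₀ x t) * (x μ - x₀ μ)

/-- `x`-derivative of the integrand. -/
noncomputable def Pder {m : ℕ} (g : Fin m → (Fin m → ℝ) → ℝ) (x₀ x : Fin m → ℝ) (t : ℝ) :
    (Fin m → ℝ) →L[ℝ] ℝ :=
  ∑ μ, (g μ (lseg x₀ x t) • (ContinuousLinearMap.proj μ)
    + (x μ - x₀ μ) • ((fderiv ℝ (g μ) (lseg x₀ x t)).comp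
        (t • ContinuousLinearMap.id ℝ (Fin m → ℝ))))

lemma exists_potential {m : ℕ} {U : Set (Fin m → ℝ)} (hUopen : IsOpen U)
    (hUconv : Convex ℝ U) (g : Fin m → (Fin m → ℝ) → ℝ)
    (hg : ∀ μ, ContDiff ℝ (⊤:ℕ∞) (g μ))
    (hcl : ∀ x ∈ U, ∀ μ ν : Fin m, pd ν (g μ) x = pd μ (g ν) x) :
    ∃ f : (Fin m → ℝ) → ℝ, ContDiffOn ℝ (⊤:ℕ∞) f U ∧
      ∀ x ∈ U, HasFDerivAt f
        (∑ ν, g ν x • (ContinuousLinearMap.proj (R := ℝ) (φ := fun _ : Fin m => ℝ) ν)) x := by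
  classical
  rcases U.eq_empty_or_nonempty with rfl | ⟨x₀, hx₀⟩
  · exact ⟨fun _ => 0, contDiff_const.contDiffOn, fun x hx => absurd hx (by simp)⟩
  have hgc : ∀ μ, Continuous (g μ) := fun μ => (hg μ).continuous
  have hgd : ∀ μ, Differentiable ℝ (g μ) := fun μ => (hg μ).differentiable (by simp)
  have hg' : ∀ μ, Continuous (fderiv ℝ (g μ)) := fun μ =>
    ((hg μ).fderiv_right top_add_one_le).continuous
  have hℓc : Continuous fun p : (Fin m → ℝ) × ℝ => lseg x₀ p.1 p.2 := by
    unfold lseg; fun_prop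
  have hℓU : ∀ x ∈ U, ∀ t ∈ Set.Icc (0:ℝ) 1, lseg x₀ x t ∈ U := fun x hx t ht =>
    hUconv.add_smul_sub_mem hx₀ hx ht
  have hℓone : ∀ x : Fin m → ℝ, lseg x₀ x 1 = x := by
    intro x; unfold lseg; simp
  -- continuity of the integrand and its derivative
  have hFc : Continuous fun p : (Fin m → ℝ) × ℝ => Pfun g x₀ p.1 p.2 := by
    unfold Pfun
    refine continuous_finset_sum _ fun μ _ => ((hgc μ).comp hℓc).mul ?_
    fun_prop
  have hF'c : Continuous fun p : (Fin m → ℝ) × ℝ => Pder g x₀ p.1 p.2 := by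
    unfold Pder
    refine continuous_finset_sum _ fun μ _ => Continuous.add ?_ ?_
    · exact ((hgc μ).comp hℓc).smul continuous_const
    · refine Continuous.smul (((continuous_apply μ).comp continuous_fst).sub continuous_const) ?_
      exact Continuous.clm_comp ((hg' μ).comp hℓc) (continuous_snd.smul continuous_const)
  -- pointwise differentiability in `x`
  have hdiff : ∀ (t : ℝ) (x : Fin m → ℝ),
      HasFDerivAt (fun y => Pfun g x₀ y t) (Pder g x₀ x t) x := by
    intro t x
    unfold Pfun Pder
    refine HasFDerivAt.fun_sum fun μ _ => ?_
    have hℓd : HasFDerivAt (fun y => lseg x₀ y t)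
        (t • ContinuousLinearMap.id ℝ (Fin m → ℝ)) x := by
      unfold lseg
      exact (((hasFDerivAt_id x).sub_const x₀).const_smul t).const_add x₀
    have h2 : HasFDerivAt (fun y => g μ (lseg x₀ y t))
        ((fderiv ℝ (g μ) (lseg x₀ x t)).comp (t • ContinuousLinearMap.id ℝ (Fin m → ℝ))) x :=
      ((hgd μ (lseg x₀ x t)).hasFDerivAt).comp x hℓd
    have h3 : HasFDerivAt (fun y : Fin m → ℝ => y μ - x₀ μ)
        (ContinuousLinearMap.proj (R := ℝ) (φ := fun _ : Fin m => ℝ) μ) x := by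
      simpa using ((ContinuousLinearMap.proj (R := ℝ) (φ := fun _ : Fin m => ℝ) μ)
        |>.hasFDerivAt (x := x)).sub_const (x₀ μ)
    exact h2.mul h3
  -- the potential
  set f : (Fin m → ℝ) → ℝ := fun x => ∫ t in Set.Ioc (0:ℝ) 1, Pfun g x₀ x t with hfdef
  -- differentiation under the integral sign
  have key : ∀ x₁ ∈ U, HasFDerivAt f (∫ t in Set.Ioc (0:ℝ) 1, Pder g x₀ x₁ t) x₁ := by
    intro x₁ _
    obtain ⟨C, hC⟩ := ((isCompact_closedBall x₁ 1).prod isCompact_Icc).exists_bound_of_continuousOn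
      (hF'c.continuousOn (s := closedBall x₁ 1 ×ˢ Set.Icc (0:ℝ) 1))
    refine hasFDerivAt_integral_of_dominated_of_fderiv_le (𝕜 := ℝ)
      (F' := fun x t => Pder g x₀ x t) (bound := fun _ => C) (ball_mem_nhds x₁ one_pos) ?_ ?_ ?_ ?_ ?_ ?_
    · exact Filter.Eventually.of_forall fun x =>
        ((hFc.comp (continuous_const.prodMk continuous_id)).aestronglyMeasurable)
    · exact (hFc.comp (continuous_const.prodMk continuous_id)).integrableOn_Ioc
    · exact (hF'c.comp (continuous_const.prodMk continuous_id)).aestronglyMeasurable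
    · refine (MeasureTheory.ae_restrict_mem measurableSet_Ioc).mono fun t ht x hx => ?_
      exact hC (x, t) ⟨ball_subset_closedBall hx, ⟨ht.1.le, ht.2⟩⟩
    · exact (MeasureTheory.integrableOn_const_iff).2 (Or.inr measure_Ioc_lt_top)
    · exact Filter.Eventually.of_forall fun t x _ => hdiff t x
  -- evaluating the derivative using closedness and the FTC
  have hint : ∀ x₁ ∈ U, (∫ t in Set.Ioc (0:ℝ) 1, Pder g x₀ x₁ t)
      = ∑ ν, g ν x₁ • (ContinuousLinearMap.proj (R := ℝ) (φ := fun _ : Fin m => ℝ) ν) := by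
    intro x₁ hx₁
    have hInt : MeasureTheory.Integrable (fun t => Pder g x₀ x₁ t)
        (MeasureTheory.volume.restrict (Set.Ioc (0:ℝ) 1)) :=
      (hF'c.comp (continuous_const.prodMk continuous_id)).integrableOn_Ioc
    refine ContinuousLinearMap.ext fun v => ?_
    rw [ContinuousLinearMap.integral_apply hInt]
    -- pointwise identity on `Ioc 0 1`
    have hpt : ∀ t ∈ Set.Ioc (0:ℝ) 1, (Pder g x₀ x₁ t) v
        = ∑ ν, v ν * (g ν (lseg x₀ x₁ t)
            + t * (fderiv ℝ (g ν) (lseg x₀ x₁ t)) (x₁ - x₀)) := by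
      intro t ht
      have hcU : lseg x₀ x₁ t ∈ U := hℓU x₁ hx₁ t ⟨ht.1.le, ht.2⟩
      unfold Pder
      simp only [ContinuousLinearMap.sum_apply, ContinuousLinearMap.add_apply,
        ContinuousLinearMap.smul_apply, ContinuousLinearMap.coe_comp', Function.comp_apply,
        ContinuousLinearMap.proj_apply, ContinuousLinearMap.id_apply, smul_eq_mul, _root_.map_smul]
      have hswap : ∑ μ, (x₁ μ - x₀ μ) * (t * (fderiv ℝ (g μ) (lseg x₀ x₁ t)) v)
          = ∑ ν, v ν * (t * (fderiv ℝ (g ν) (lseg x₀ x₁ t)) (x₁ - x₀)) := by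
        set c := lseg x₀ x₁ t with hcdef
        calc ∑ μ, (x₁ μ - x₀ μ) * (t * (fderiv ℝ (g μ) c) v)
            = ∑ μ, ∑ ν, v ν * (t * ((x₁ μ - x₀ μ) * (fderiv ℝ (g ν) c) (Pi.single μ 1))) := by
              refine Finset.sum_congr rfl fun μ _ => ?_
              rw [clm_apply_eq_sum (fderiv ℝ (g μ) c) v, Finset.mul_sum, Finset.mul_sum]
              refine Finset.sum_congr rfl fun ν _ => ?_
              rw [show (fderiv ℝ (g μ) c) (Pi.single ν 1) = pd ν (g μ) c from rfl,
                hcl c hcU μ ν,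
                show pd μ (g ν) c = (fderiv ℝ (g ν) c) (Pi.single μ 1) from rfl]
              ring
          _ = ∑ ν, v ν * (t * (fderiv ℝ (g ν) c) (x₁ - x₀)) := by
              rw [Finset.sum_comm]
              refine Finset.sum_congr rfl fun ν _ => ?_
              rw [clm_apply_eq_sum (fderiv ℝ (g ν) c) (x₁ - x₀), Finset.mul_sum,
                Finset.mul_sum]
              refine Finset.sum_congr rfl fun μ _ => ?_
              simp [Pi.sub_apply]
      rw [Finset.sum_add_distrib, hswap, ← Finset.sum_add_distrib]
      refine Finset.sum_congr rfl fun ν _ => ?_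
      ring
    rw [MeasureTheory.setIntegral_congr_fun measurableSet_Ioc hpt]
    -- integrate each summand with the FTC
    have hψcont : ∀ ν : Fin m, Continuous fun t => g ν (lseg x₀ x₁ t)
        + t * (fderiv ℝ (g ν) (lseg x₀ x₁ t)) (x₁ - x₀) := by
      intro ν
      have hlin : Continuous fun t : ℝ => lseg x₀ x₁ t := by unfold lseg; fun_prop
      refine ((hgc ν).comp hlin).add (continuous_id.mul ?_)
      exact (ContinuousLinearMap.apply ℝ ℝ (x₁ - x₀)).continuous.comp ((hg' ν).comp hlin)
    rw [MeasureTheory.integral_finset_sum]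
    swap
    · intro ν _
      exact ((continuous_const.mul (hψcont ν)).integrableOn_Ioc)
    have hFTC : ∀ ν : Fin m, (∫ t in Set.Ioc (0:ℝ) 1, (g ν (lseg x₀ x₁ t)
        + t * (fderiv ℝ (g ν) (lseg x₀ x₁ t)) (x₁ - x₀))) = g ν x₁ := by
      intro ν
      have hψ : ∀ t : ℝ, HasDerivAt (fun s => s * g ν (lseg x₀ x₁ s))
          (g ν (lseg x₀ x₁ t) + t * (fderiv ℝ (g ν) (lseg x₀ x₁ t)) (x₁ - x₀)) t := by
        intro t
        have hc : HasDerivAt (fun s : ℝ => lseg x₀ x₁ s) (x₁ - x₀) t := by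
          unfold lseg
          simpa using ((hasDerivAt_id t).smul_const (x₁ - x₀)).const_add x₀
        have hgν : HasDerivAt (fun s => g ν (lseg x₀ x₁ s))
            ((fderiv ℝ (g ν) (lseg x₀ x₁ t)) (x₁ - x₀)) t :=
          (hgd ν _).hasFDerivAt.comp_hasDerivAt t hc
        simpa using (hasDerivAt_id t).fun_mul hgν
      have h2 := intervalIntegral.integral_eq_sub_of_hasDerivAt
        (f := fun s => s * g ν (lseg x₀ x₁ s))
        (f' := fun t => g ν (lseg x₀ x₁ t) + t * (fderiv ℝ (g ν) (lseg x₀ x₁ t)) (x₁ - x₀))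
        (fun t _ => hψ t) ((hψcont ν).intervalIntegrable 0 1)
      rw [intervalIntegral.integral_of_le zero_le_one] at h2
      rw [h2]
      simp [hℓone x₁]
    calc (∑ ν, ∫ t in Set.Ioc (0:ℝ) 1, v ν * (g ν (lseg x₀ x₁ t)
          + t * (fderiv ℝ (g ν) (lseg x₀ x₁ t)) (x₁ - x₀)))
        = ∑ ν, v ν * g ν x₁ := by
          refine Finset.sum_congr rfl fun ν _ => ?_
          rw [show (fun t => v ν * (g ν (lseg x₀ x₁ t)
              + t * (fderiv ℝ (g ν) (lseg x₀ x₁ t)) (x₁ - x₀)))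
            = fun t => v ν • (g ν (lseg x₀ x₁ t)
              + t * (fderiv ℝ (g ν) (lseg x₀ x₁ t)) (x₁ - x₀)) from rfl,
            MeasureTheory.integral_smul, hFTC ν, smul_eq_mul]
      _ = (∑ ν, g ν x₁ • (ContinuousLinearMap.proj (R := ℝ)
            (φ := fun _ : Fin m => ℝ) ν)) v := by
          simp only [ContinuousLinearMap.sum_apply, ContinuousLinearMap.smul_apply,
            ContinuousLinearMap.proj_apply, smul_eq_mul]
          exact Finset.sum_congr rfl fun ν _ => mul_comm _ _
  have hhas : ∀ x ∈ U, HasFDerivAt f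
      (∑ ν, g ν x • (ContinuousLinearMap.proj (R := ℝ) (φ := fun _ : Fin m => ℝ) ν)) x := by
    intro x hx
    have := key x hx
    rwa [hint x hx] at this
  refine ⟨f, ?_, hhas⟩
  -- smoothness of the potential on `U`
  have hGsm : ContDiff ℝ (⊤:ℕ∞) fun x =>
      (∑ ν, g ν x • (ContinuousLinearMap.proj (R := ℝ) (φ := fun _ : Fin m => ℝ) ν)) :=
    ContDiff.sum fun ν _ => (hg ν).smul contDiff_const
  refine (contDiffOn_infty_iff_fderiv_of_isOpen hUopen).2 ⟨?_, ?_⟩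
  · exact fun x hx => ((hhas x hx).differentiableAt).differentiableWithinAt
  · exact (hGsm.contDiffOn).congr fun x hx => (hhas x hx).fderiv

end HerglotzAux

open HerglotzAux

/-- Herglotz variational principle for fields, vakonomic version via Lagrange
multipliers, over an open convex set `U ⊆ ℝᵐ`. -/
theorem herglotz_fields_vakonomic (m n : ℕ) (hm : 1 ≤ m) (hn : 1 ≤ n)
    (L : Jet1 m n → ℝ) (hL : ContDiff ℝ (⊤ : ℕ∞) L)
    (U : Set (Fin m → ℝ)) (hUopen : IsOpen U) (hUconv : Convex ℝ U)
    (u : (Fin m → ℝ) → Fin n → ℝ) (hu : ContDiff ℝ (⊤ : ℕ∞) u)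
    (z : (Fin m → ℝ) → Fin m → ℝ) (hz : ContDiff ℝ (⊤ : ℕ∞) z)
    (hconstr : ∀ x ∈ U,
      (∑ μ : Fin m, pd μ (fun y => z y μ) x) = L (jet u z x)) :
    -- (1) existence of a Lagrange multiplier satisfying the Euler–Lagrange
    -- equations of the extended Lagrangian
    (∃ lam : (Fin m → ℝ) → ℝ, ContDiffOn ℝ (⊤ : ℕ∞) lam U ∧
      (∀ x ∈ U, lam x ≠ 1) ∧
      (∀ x ∈ U, ∀ ν : Fin m,
        pd ν lam x = (1 - lam x) * Lz L ν (jet u z x)) ∧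
      (∀ x ∈ U, ∀ a : Fin n,
        (∑ μ : Fin m, pd μ (fun y => (1 - lam y) * Lw L a μ (jet u z y)) x)
          = (1 - lam x) * Lu L a (jet u z x)))
    ↔
    -- (2) Herglotz field equations and closed action dependence along `(u, z)`
    ((∀ x ∈ U, ∀ a : Fin n,
        (∑ μ : Fin m, pd μ (fun y => Lw L a μ (jet u z y)) x) - Lu L a (jet u z x)
          = ∑ μ : Fin m, Lw L a μ (jet u z x) * Lz L μ (jet u z x)) ∧
      (∀ x ∈ U, ∀ μ ν : Fin m,
        pd ν (fun y => Lz L μ (jet u z y)) x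
          = pd μ (fun y => Lz L ν (jet u z y)) x)) := by
  classical
  have hGsm : ∀ ν : Fin m, ContDiff ℝ (⊤:ℕ∞) (fun y => Lz L ν (jet u z y)) := by
    intro ν; unfold Lz; exact contDiff_dLjet hL hu hz _
  have hWsm : ∀ (a : Fin n) (μ : Fin m),
      ContDiff ℝ (⊤:ℕ∞) (fun y => Lw L a μ (jet u z y)) := by
    intro a μ; unfold Lw; exact contDiff_dLjet hL hu hz _
  constructor
  · -- (1) → (2)
    rintro ⟨lam, hlam, hne, hlz, hEL⟩
    have hl1 : ∀ x ∈ U, (1:ℝ) - lam x ≠ 0 := fun x hx =>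
      sub_ne_zero_of_ne (Ne.symm (hne x hx))
    have hlamAt : ∀ x ∈ U, ContDiffAt ℝ (⊤:ℕ∞) lam x := fun x hx =>
      hlam.contDiffAt (hUopen.mem_nhds hx)
    have hld : ∀ x ∈ U, DifferentiableAt ℝ lam x := fun x hx =>
      (hlamAt x hx).differentiableAt (by simp)
    constructor
    · -- Herglotz field equations
      intro x hx a
      have hdW : ∀ μ : Fin m, DifferentiableAt ℝ (fun y => Lw L a μ (jet u z y)) x :=
        fun μ => ((hWsm a μ).differentiable (by simp) x)
      have expand : ∀ μ : Fin m, pd μ (fun y => (1 - lam y) * Lw L a μ (jet u z y)) x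
          = -(pd μ lam x) * Lw L a μ (jet u z x) + (1 - lam x)
              * pd μ (fun y => Lw L a μ (jet u z y)) x := by
        intro μ
        rw [pd_mul ((differentiableAt_const (1:ℝ)).fun_sub (hld x hx)) (hdW μ), pd_const_sub]
      have key : (∑ μ : Fin m, ((1 - lam x) * pd μ (fun y => Lw L a μ (jet u z y)) x
            - (1 - lam x) * (Lw L a μ (jet u z x) * Lz L μ (jet u z x))))
          = (1 - lam x) * Lu L a (jet u z x) := by
        rw [← hEL x hx a]
        refine Finset.sum_congr rfl fun μ _ => ?_
        rw [expand μ, hlz x hx μ]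
        ring
      rw [Finset.sum_sub_distrib, ← Finset.mul_sum, ← Finset.mul_sum] at key
      refine mul_left_cancel₀ (hl1 x hx) ?_
      linear_combination key
    · -- closed action dependence
      intro x hx μ ν
      have hEv : ∀ σ : Fin m, (fun y => pd σ lam y)
          =ᶠ[nhds x] (fun y => (1 - lam y) * Lz L σ (jet u z y)) :=
        fun σ => Filter.eventuallyEq_of_mem (hUopen.mem_nhds hx) (fun y hy => hlz y hy σ)
      have hGd : ∀ ρ : Fin m, DifferentiableAt ℝ (fun y => Lz L ρ (jet u z y)) x :=
        fun ρ => (hGsm ρ).differentiable (by simp) x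
      have h1 : ∀ ρ σ : Fin m, pd ρ (fun y => pd σ lam y) x
          = (1 - lam x) * (pd ρ (fun y => Lz L σ (jet u z y)) x
              - Lz L ρ (jet u z x) * Lz L σ (jet u z x)) := by
        intro ρ σ
        rw [pd_congr_nhds (hEv σ),
          pd_mul ((differentiableAt_const (1:ℝ)).fun_sub (hld x hx)) (hGd σ),
          pd_const_sub, hlz x hx ρ]
        ring
      have h2 := pd_pd_symm (hlamAt x hx) μ ν
      rw [h1 μ ν, h1 ν μ] at h2
      have h3 := mul_left_cancel₀ (hl1 x hx) h2
      linear_combination -h3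
  · -- (2) → (1)
    rintro ⟨hHerg, hclosed⟩
    obtain ⟨f, hfsm, hfd⟩ := exists_potential hUopen hUconv
      (fun ν y => Lz L ν (jet u z y)) hGsm
      (fun x hx μ ν => hclosed x hx μ ν)
    set lam : (Fin m → ℝ) → ℝ := fun x => 1 - Real.exp (-(f x)) with hlamdef
    have hlamval : ∀ x : Fin m → ℝ, (1:ℝ) - lam x = Real.exp (-(f x)) := by
      intro x; simp [hlamdef]
    have hlamd : ∀ x ∈ U, HasFDerivAt lam (Real.exp (-(f x)) •
        (∑ ν, Lz L ν (jet u z x) • (ContinuousLinearMap.proj (R := ℝ)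
          (φ := fun _ : Fin m => ℝ) ν))) x := by
      intro x hx
      have h1 : HasFDerivAt (fun y => Real.exp (-(f y)))
          (Real.exp (-(f x)) • (-(∑ ν, Lz L ν (jet u z x) • (ContinuousLinearMap.proj (R := ℝ)
            (φ := fun _ : Fin m => ℝ) ν)))) x :=
        by have := (Real.hasDerivAt_exp (-(f x))).comp_hasFDerivAt x (hfd x hx).fun_neg; exact this
      have h2 := h1.const_sub 1
      simpa [hlamdef] using h2
    have hpd : ∀ x ∈ U, ∀ ν : Fin m,
        pd ν lam x = (1 - lam x) * Lz L ν (jet u z x) := by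
      intro x hx ν
      rw [hasFDerivAt_pd (hlamd x hx) ν, hlamval x]
      rw [ContinuousLinearMap.smul_apply, sum_proj_apply_single
        (fun ν => Lz L ν (jet u z x)) ν, smul_eq_mul]
    refine ⟨lam, ?_, ?_, hpd, ?_⟩
    · -- smoothness
      exact contDiffOn_const.sub (Real.contDiff_exp.comp_contDiffOn hfsm.neg)
    · -- `lam ≠ 1`
      intro x _ h
      have hpos := Real.exp_pos (-(f x))
      have h' : lam x = 1 - Real.exp (-(f x)) := by rw [hlamdef]
      rw [h] at h'
      linarith
    · -- extended Euler–Lagrange equations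
      intro x hx a
      have hld : DifferentiableAt ℝ lam x := (hlamd x hx).differentiableAt
      have hdW : ∀ μ : Fin m, DifferentiableAt ℝ (fun y => Lw L a μ (jet u z y)) x :=
        fun μ => ((hWsm a μ).differentiable (by simp) x)
      have expand : ∀ μ : Fin m, pd μ (fun y => (1 - lam y) * Lw L a μ (jet u z y)) x
          = -(pd μ lam x) * Lw L a μ (jet u z x) + (1 - lam x)
              * pd μ (fun y => Lw L a μ (jet u z y)) x := by
        intro μ
        rw [pd_mul ((differentiableAt_const (1:ℝ)).fun_sub hld) (hdW μ), pd_const_sub]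
      have hH := hHerg x hx a
      calc (∑ μ : Fin m, pd μ (fun y => (1 - lam y) * Lw L a μ (jet u z y)) x)
          = ∑ μ : Fin m, ((1 - lam x) * pd μ (fun y => Lw L a μ (jet u z y)) x
              - (1 - lam x) * (Lw L a μ (jet u z x) * Lz L μ (jet u z x))) := by
            refine Finset.sum_congr rfl fun μ _ => ?_
            rw [expand μ, hpd x hx μ]
            ring
        _ = (1 - lam x) * ((∑ μ : Fin m, pd μ (fun y => Lw L a μ (jet u z y)) x)
              - ∑ μ : Fin m, Lw L a μ (jet u z x) * Lz L μ (jet u z x)) := by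
            rw [Finset.sum_sub_distrib, ← Finset.mul_sum, ← Finset.mul_sum, mul_sub]
        _ = (1 - lam x) * Lu L a (jet u z x) := by
            congr 1
            linarith [hH]
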